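/- arXiv:1511.05052 — 2 statements merged into one kernel-verified Lean document; each statement's English description precedes it below -/
import Mathlib

section
/- Let h : ℝ × S^{n−1} → ℝⁿ × ℝⁿ be defined by h(t, x) = (a(t)x, b(t)x) where γ = (a, b) : ℝ → ℝ² is an embedded smooth curve with a(t) = t, b(t) = 0 for t ≤ −κ; a(t) = 0, b(t) = t for t ≥ κ; and a(t) < 0 < b(t) for t ∈ (−κ, κ). Then h is injective. -/
/-- The surgery profile map `h(t, x) = (a(t) • x, b(t) • x)` on `ℝ × S^{n-1}` is
injective, for an embedded curve `γ = (a, b)` which is `(t, 0)` for `t ≤ -κ`,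
`(0, t)` for `t ≥ κ`, and satisfies `a < 0 < b` on `(-κ, κ)`. -/
theorem stmt_11 (n : ℕ) (hn : 2 ≤ n) (κ : ℝ) (hκ : 0 < κ) (a b : ℝ → ℝ)
    (h₁ : ∀ t, t ≤ -κ → a t = t ∧ b t = 0)
    (h₂ : ∀ t, κ ≤ t → a t = 0 ∧ b t = t)
    (h₃ : ∀ t, -κ < t → t < κ → a t < 0 ∧ 0 < b t)
    (hγ : Function.Injective fun t => ((a t, b t) : ℝ × ℝ)) :
    Function.Injective
      (fun p : ℝ × Metric.sphere (0 : EuclideanSpace ℝ (Fin n)) 1 =>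
        ((a p.1 • (p.2 : EuclideanSpace ℝ (Fin n)),
          b p.1 • (p.2 : EuclideanSpace ℝ (Fin n))) :
            EuclideanSpace ℝ (Fin n) × EuclideanSpace ℝ (Fin n))) := by
  -- sign facts: a ≤ 0 ≤ b everywhere
  have ha : ∀ t, a t ≤ 0 := by
    intro t
    rcases le_or_gt t (-κ) with h | h
    · rw [(h₁ t h).1]; linarith
    rcases lt_or_ge t κ with h' | h'
    · exact (h₃ t h h').1.le
    · rw [(h₂ t h').1]
  have hb : ∀ t, 0 ≤ b t := by
    intro t
    rcases le_or_gt t (-κ) with h | h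
    · rw [(h₁ t h).2]
    rcases lt_or_ge t κ with h' | h'
    · exact (h₃ t h h').2.le
    · rw [(h₂ t h').2]; linarith
  have hne : ∀ t, a t ≠ 0 ∨ b t ≠ 0 := by
    intro t
    rcases le_or_gt t (-κ) with h | h
    · left; rw [(h₁ t h).1]; linarith
    rcases lt_or_ge t κ with h' | h'
    · left; exact (h₃ t h h').1.ne
    · right; rw [(h₂ t h').2]; linarith
  rintro ⟨t, x⟩ ⟨s, y⟩ hxy
  simp only [Prod.mk.injEq] at hxy
  obtain ⟨e1, e2⟩ := hxy
  have hxn : ‖(x : EuclideanSpace ℝ (Fin n))‖ = 1 := by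
    simpa using x.2
  have hyn : ‖(y : EuclideanSpace ℝ (Fin n))‖ = 1 := by
    simpa using y.2
  have na : |a t| = |a s| := by
    have := congrArg norm e1
    simpa [norm_smul, hxn, hyn] using this
  have nb : |b t| = |b s| := by
    have := congrArg norm e2
    simpa [norm_smul, hxn, hyn] using this
  have haa : a t = a s := by
    rw [abs_of_nonpos (ha t), abs_of_nonpos (ha s)] at na; linarith
  have hbb : b t = b s := by
    rw [abs_of_nonneg (hb t), abs_of_nonneg (hb s)] at nb; linarith
  have hts : t = s := hγ (by simp [haa, hbb])
  subst hts
  have hxy : (x : EuclideanSpace ℝ (Fin n)) = y := by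
    rcases hne t with h | h
    · exact smul_right_injective _ h e1
    · exact smul_right_injective _ h e2
  exact Prod.ext rfl (Subtype.ext hxy)
end

section
/- With h as above, the image of h agrees with (ℝⁿ × {0}) ∪ ({0} × ℝⁿ) outside the ball of radius κ centered at the origin of ℝⁿ × ℝⁿ: every point of im(h) with norm > κ lies in (ℝⁿ × {0}) ∪ ({0} × ℝⁿ), and conversely every point of (ℝⁿ × {0} ∪ {0} × ℝⁿ) with norm > κ lies in im(h), provided additionally ‖γ(t)‖ ≤ κ for t ∈ [−κ, κ]. -/
/-- Outside the ball of radius `κ`, the image of the surgery profile map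
`h(t,x) = (a(t) • x, b(t) • x)` agrees with `(ℝⁿ × {0}) ∪ ({0} × ℝⁿ)`. -/
theorem stmt_12 (n : ℕ) (hn : 2 ≤ n) (κ : ℝ) (hκ : 0 < κ) (a b : ℝ → ℝ)
    (h₁ : ∀ t, t ≤ -κ → a t = t ∧ b t = 0)
    (h₂ : ∀ t, κ ≤ t → a t = 0 ∧ b t = t)
    (h₃ : ∀ t, -κ < t → t < κ → a t < 0 ∧ 0 < b t)
    (hγ : Function.Injective fun t => ((a t, b t) : ℝ × ℝ))
    (hball : ∀ t, |t| ≤ κ → (a t) ^ 2 + (b t) ^ 2 ≤ κ ^ 2) :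
    (∀ p ∈ {q : EuclideanSpace ℝ (Fin n) × EuclideanSpace ℝ (Fin n) |
        ∃ (t : ℝ) (x : EuclideanSpace ℝ (Fin n)), ‖x‖ = 1 ∧ q = (a t • x, b t • x)},
      κ < ‖p‖ → p.2 = 0 ∨ p.1 = 0)
    ∧ (∀ p : EuclideanSpace ℝ (Fin n) × EuclideanSpace ℝ (Fin n),
        (p.2 = 0 ∨ p.1 = 0) → κ < ‖p‖ →
        ∃ (t : ℝ) (x : EuclideanSpace ℝ (Fin n)), ‖x‖ = 1 ∧ p = (a t • x, b t • x)) := by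
  constructor
  · rintro p ⟨t, x, hx, rfl⟩ hnorm
    have hnorm' : κ < max |a t| |b t| := by
      simpa [Prod.norm_def, norm_smul, hx] using hnorm
    have ht : κ < |t| := by
      by_contra hle
      push_neg at hle
      have hb := hball t hle
      rcases lt_max_iff.mp hnorm' with h | h
      · nlinarith [sq_abs (a t), sq_nonneg (b t)]
      · nlinarith [sq_abs (b t), sq_nonneg (a t)]
    rcases lt_abs.mp ht with h | h
    · have := h₂ t h.le
      right
      simp [this.1]
    · have := h₁ t (by linarith)
      left
      simp [this.2]
  · rintro p (hp | hp) hnorm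
    · have hnorm1 : κ < ‖p.1‖ := by
        simpa [Prod.norm_def, hp] using hnorm
      have hne : ‖p.1‖ ≠ 0 := ne_of_gt (lt_trans hκ hnorm1)
      refine ⟨-‖p.1‖, (-‖p.1‖⁻¹) • p.1, ?_, ?_⟩
      · rw [norm_smul]
        simp [abs_of_nonneg (norm_nonneg p.1), abs_of_nonneg (inv_nonneg.mpr (norm_nonneg p.1)),
          inv_mul_cancel₀ hne]
      · obtain ⟨ha, hb⟩ := h₁ (-‖p.1‖) (by linarith)
        rw [ha, hb]
        ext1
        · simp [smul_smul, mul_inv_cancel₀ hne]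
        · simp [hp]
    · have hnorm2 : κ < ‖p.2‖ := by
        simpa [Prod.norm_def, hp] using hnorm
      have hne : ‖p.2‖ ≠ 0 := ne_of_gt (lt_trans hκ hnorm2)
      refine ⟨‖p.2‖, ‖p.2‖⁻¹ • p.2, ?_, ?_⟩
      · rw [norm_smul]
        simp [abs_of_nonneg (inv_nonneg.mpr (norm_nonneg p.2)), inv_mul_cancel₀ hne]
      · obtain ⟨ha, hb⟩ := h₂ ‖p.2‖ (by linarith)
        rw [ha, hb]
        ext1
        · simp [hp]
        · simp [smul_smul, mul_inv_cancel₀ hne]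
end
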